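/- arXiv:0707.1063 — 2 statements merged into one kernel-verified Lean document; each statement's English description precedes it below -/
import Mathlib

section
/- Let f : ℝ → ℝ be bounded (|f| ≤ A), let h ∈ L¹(ℝ) be bounded, let (t_l)_{l ∈ ℤ} be a sequence of reals and (ψ_l)_{l ∈ ℤ} functions ℝ → ℝ such that C := sup_t ∑_{l ∈ ℤ} |ψ_l(t - t_l)| < ∞, and suppose for all t, τ: h(t - τ) = lim_{L→∞} ∑_{l=-L}^{L} h(t_l - τ) ψ_l(t - t_l). If f satisfies the reproducing identity f(t) = ∫_ℝ f(τ) h(t - τ) dτ for all t, then f(t) = lim_{L→∞} ∑_{l=-L}^{L} f(t_l) ψ_l(t - t_l) for all t, with the series converging absolutely. -/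
open MeasureTheory Filter
open scoped Topology ENNReal

/-!
Insert the kernel expansion of `h (t - τ)` into the reproducing identity
`f t = ∫ f τ * h (t - τ)` and integrate term by term. Since `|f| ≤ A`, the `l`-th term has
`L¹` norm at most `A * ‖h‖₁ * |ψ l (t - tl l)|`, which is summable; so the series converges
absolutely for a.e. `τ` (its symmetric partial sums then have the same limit), sum and integral
commute, and the `l`-th integral is `f (tl l) * ψ l (t - tl l)` by the reproducing identity at
`tl l`.

The subtle point is that `f` is not assumed measurable; the reproducing identity forces it.
The set `T` of `c` for which `τ ↦ f τ * h (c - τ)` is integrable is closed, because translation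
is continuous in `L¹` and an `L¹`-convergent sequence has an a.e. convergent subsequence. On `T`,
`|f c' - f c| ≤ A * ‖h (c' - ·) - h (c - ·)‖₁`, so `f` is continuous there, and off `T` the
Bochner integral, hence `f`, vanishes.
-/

section SummableIntegralNorm

variable {α ι E : Type*} [MeasurableSpace α] {μ : Measure α} [Countable ι]
  [NormedAddCommGroup E]

theorem ae_summable_norm_of_summable_integral_norm {F : ι → α → E}
    (hF : ∀ i, Integrable (F i) μ) (hFsum : Summable fun i => ∫ a, ‖F i a‖ ∂μ) :
    ∀ᵐ a ∂μ, Summable fun i => ‖F i a‖ := by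
  refine summable_norm_of_tsum_eLpNorm_ne_top le_rfl (fun i => (hF i).aestronglyMeasurable) ?_
  have hnorm (i : ι) : eLpNorm (F i) 1 μ = ENNReal.ofReal (∫ a, ‖F i a‖ ∂μ) := by
    rw [eLpNorm_one_eq_lintegral_enorm, ofReal_integral_norm_eq_lintegral_enorm (hF i)]
  rw [tsum_congr hnorm,
    ← ENNReal.ofReal_tsum_of_nonneg (fun i => integral_nonneg fun a => norm_nonneg _) hFsum]
  exact ENNReal.ofReal_ne_top

theorem hasSum_integral_of_ae_hasSum [NormedSpace ℝ E] [CompleteSpace E]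
    {L : SummationFilter ι} [L.LeAtTop] [L.NeBot] {F : ι → α → E} {g : α → E}
    (hF : ∀ i, Integrable (F i) μ) (hFsum : Summable fun i => ∫ a, ‖F i a‖ ∂μ)
    (hg : ∀ᵐ a ∂μ, HasSum (fun i => F i a) (g a) L) :
    HasSum (fun i => ∫ a, F i a ∂μ) (∫ a, g a ∂μ) := by
  convert hasSum_integral_of_summable_integral_norm hF hFsum using 1
  refine integral_congr_ae ?_
  filter_upwards [ae_summable_norm_of_summable_integral_norm hF hFsum, hg] with a hsum ha
  exact ha.unique (hsum.of_norm.hasSum.mono_left L.le_atTop)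

end SummableIntegralNorm

section Translation

variable {G E : Type*} [NormedAddCommGroup G] [MeasurableSpace G] [BorelSpace G]
  {μ : Measure G} [μ.IsAddLeftInvariant] [μ.IsNegInvariant] [IsLocallyFiniteMeasure μ]
  [μ.InnerRegularCompactLTTop] [NormedAddCommGroup E] {h : G → E}

theorem MeasureTheory.Integrable.tendsto_eLpNorm_comp_sub_left (hh : Integrable h μ) (c : G) :
    Tendsto (fun c' => eLpNorm (fun τ => h (c' - τ) - h (c - τ)) 1 μ) (𝓝 c) (𝓝 0) := by
  let sub : C(G × G, G) := ⟨fun p => p.1 - p.2, by fun_prop⟩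
  have hsub (c : G) : MeasurePreserving (sub.curry c) μ μ := Measure.measurePreserving_sub_left μ c
  let T (c : G) : Lp E 1 μ := Lp.compMeasurePreserving (sub.curry c) (hsub c) (hh.toL1 h)
  have hT : Continuous T :=
    continuous_const.compMeasurePreservingLp sub.curry.continuous hsub ENNReal.one_ne_top
  have hT_ae (c : G) : T c =ᵐ[μ] fun τ => h (c - τ) :=
    (Lp.coeFn_compMeasurePreserving _ (hsub c)).trans
      ((hsub c).quasiMeasurePreserving.ae_eq_comp hh.coeFn_toL1)
  have hedist (c' : G) : edist (T c') (T c) = eLpNorm (fun τ => h (c' - τ) - h (c - τ)) 1 μ := by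
    rw [Lp.edist_def]
    exact eLpNorm_congr_ae ((hT_ae c').sub (hT_ae c))
  have hlim := (hT.tendsto c).edist (tendsto_const_nhds (x := T c))
  rw [edist_self] at hlim
  simpa only [hedist] using hlim

theorem MeasureTheory.Integrable.tendsto_integral_norm_comp_sub_left (hh : Integrable h μ)
    (c : G) : Tendsto (fun c' => ∫ τ, ‖h (c' - τ) - h (c - τ)‖ ∂μ) (𝓝 c) (𝓝 0) := by
  have heq (c' : G) : ∫ τ, ‖h (c' - τ) - h (c - τ)‖ ∂μ
      = (eLpNorm (fun τ => h (c' - τ) - h (c - τ)) 1 μ).toReal := by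
    have hint : Integrable (fun τ => h (c' - τ) - h (c - τ)) μ :=
      (hh.comp_sub_left c').sub (hh.comp_sub_left c)
    rw [integral_norm_eq_lintegral_enorm hint.aestronglyMeasurable, eLpNorm_one_eq_lintegral_enorm]
  have hlim :=
    (ENNReal.tendsto_toReal ENNReal.zero_ne_top).comp (hh.tendsto_eLpNorm_comp_sub_left c)
  rw [ENNReal.toReal_zero] at hlim
  exact hlim.congr fun c' => (heq c').symm

end Translation

def IsReproducedBy {G : Type*} [Sub G] [MeasurableSpace G] (μ : Measure G) (h f : G → ℝ) :
    Prop :=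
  ∀ t, f t = ∫ τ, f τ * h (t - τ) ∂μ

section Reproducing

variable {G : Type*} [NormedAddCommGroup G] [MeasurableSpace G] [BorelSpace G]
  {μ : Measure G} [μ.IsAddLeftInvariant] [μ.IsNegInvariant] {f h : G → ℝ} {A : ℝ}

theorem integral_norm_mul_comp_sub_left_le (hf : ∀ t, |f t| ≤ A) (hh : Integrable h μ) {c : G}
    (hfh : Integrable (fun τ => f τ * h (c - τ)) μ) :
    ∫ τ, ‖f τ * h (c - τ)‖ ∂μ ≤ A * ∫ τ, ‖h τ‖ ∂μ := calc
  _ ≤ ∫ τ, A * ‖h (c - τ)‖ ∂μ :=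
    integral_mono hfh.norm ((hh.comp_sub_left c).norm.const_mul A) fun τ => by
      rw [norm_mul]
      exact mul_le_mul_of_nonneg_right (hf τ) (norm_nonneg _)
  _ = A * ∫ τ, ‖h τ‖ ∂μ := by
    rw [integral_const_mul, integral_sub_left_eq_self (fun τ => ‖h τ‖) μ c]

theorem IsReproducedBy.abs_sub_le (hrep : IsReproducedBy μ h f) (hf : ∀ t, |f t| ≤ A)
    (hh : Integrable h μ) {c c' : G} (hc : Integrable (fun τ => f τ * h (c - τ)) μ)
    (hc' : Integrable (fun τ => f τ * h (c' - τ)) μ) :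
    |f c' - f c| ≤ A * ∫ τ, ‖h (c' - τ) - h (c - τ)‖ ∂μ := by
  rw [hrep c', hrep c, ← integral_sub hc' hc, ← integral_const_mul, ← Real.norm_eq_abs]
  refine norm_integral_le_of_norm_le
    (((hh.comp_sub_left c').sub (hh.comp_sub_left c)).norm.const_mul A) (ae_of_all _ fun τ => ?_)
  rw [← mul_sub, norm_mul]
  exact mul_le_mul_of_nonneg_right (hf τ) (norm_nonneg _)

variable [IsLocallyFiniteMeasure μ] [μ.InnerRegularCompactLTTop]

theorem isClosed_setOf_integrable_mul_comp_sub_left (hf : ∀ t, |f t| ≤ A)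
    (hh : Integrable h μ) : IsClosed {c | Integrable (fun τ => f τ * h (c - τ)) μ} := by
  refine IsSeqClosed.isClosed fun cs c hcs hlim => ?_
  have hmeas : TendstoInMeasure μ (fun k τ => h (cs k - τ)) atTop (fun τ => h (c - τ)) :=
    tendstoInMeasure_of_tendsto_eLpNorm one_ne_zero
      (fun k => (hh.comp_sub_left _).aestronglyMeasurable)
      (hh.comp_sub_left c).aestronglyMeasurable ((hh.tendsto_eLpNorm_comp_sub_left c).comp hlim)
  obtain ⟨ns, -, hns⟩ := hmeas.exists_seq_tendsto_ae
  have hfh : AEStronglyMeasurable (fun τ => f τ * h (c - τ)) μ :=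
    aestronglyMeasurable_of_tendsto_ae atTop (fun k => (hcs (ns k)).aestronglyMeasurable)
      (hns.mono fun τ hτ => hτ.const_mul (f τ))
  refine ((hh.comp_sub_left c).abs.const_mul A).mono' hfh (ae_of_all _ fun τ => ?_)
  rw [Real.norm_eq_abs, abs_mul]
  exact mul_le_mul_of_nonneg_right (hf τ) (abs_nonneg _)

namespace IsReproducedBy

theorem continuousOn (hrep : IsReproducedBy μ h f) (hf : ∀ t, |f t| ≤ A) (hh : Integrable h μ) :
    ContinuousOn f {c | Integrable (fun τ => f τ * h (c - τ)) μ} := by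
  intro c hc
  rw [ContinuousWithinAt, tendsto_iff_dist_tendsto_zero]
  have hlim := ((hh.tendsto_integral_norm_comp_sub_left c).const_mul A).mono_left
    (nhdsWithin_le_nhds (s := {c | Integrable (fun τ => f τ * h (c - τ)) μ}))
  rw [mul_zero] at hlim
  refine squeeze_zero' (Eventually.of_forall fun _ => dist_nonneg) ?_ hlim
  filter_upwards [self_mem_nhdsWithin] with c' hc'
  exact hrep.abs_sub_le hf hh hc hc'

theorem aestronglyMeasurable (hrep : IsReproducedBy μ h f) (hf : ∀ t, |f t| ≤ A)
    (hh : Integrable h μ) : AEStronglyMeasurable f μ := by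
  have hT := (isClosed_setOf_integrable_mul_comp_sub_left hf hh).measurableSet
  have hsupp : Function.support f ⊆ {c | Integrable (fun τ => f τ * h (c - τ)) μ} :=
    fun c hc => by_contra fun hint => hc (by rw [hrep c, integral_undef hint])
  rw [← Set.indicator_eq_self.mpr hsupp, aestronglyMeasurable_indicator_iff hT]
  exact (hrep.continuousOn hf hh).aestronglyMeasurable hT

theorem integrable_mul_comp_sub_left (hrep : IsReproducedBy μ h f) (hf : ∀ t, |f t| ≤ A)
    (hh : Integrable h μ) (c : G) : Integrable (fun τ => f τ * h (c - τ)) μ :=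
  (hh.comp_sub_left c).bdd_mul (hrep.aestronglyMeasurable hf hh) (ae_of_all _ hf)

theorem hasSum_of_hasSum_kernel {ι : Type*} [Countable ι] {L : SummationFilter ι} [L.LeAtTop]
    [L.NeBot] (hrep : IsReproducedBy μ h f) (hf : ∀ t, |f t| ≤ A) (hh : Integrable h μ)
    {s : ι → G} {a : ι → ℝ} {t : G} (ha : Summable fun i => |a i|)
    (hkernel : ∀ᵐ τ ∂μ, HasSum (fun i => h (s i - τ) * a i) (h (t - τ)) L) :
    HasSum (fun i => f (s i) * a i) (f t) := by
  have hint (i : ι) : Integrable (fun τ => f τ * h (s i - τ) * a i) μ :=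
    (hrep.integrable_mul_comp_sub_left hf hh (s i)).mul_const _
  have hnorm : Summable fun i => ∫ τ, ‖f τ * h (s i - τ) * a i‖ ∂μ := by
    refine Summable.of_nonneg_of_le (fun i => integral_nonneg fun τ => norm_nonneg _)
      (fun i => ?_) (ha.mul_left (A * ∫ τ, ‖h τ‖ ∂μ))
    simp only [norm_mul _ (a i), integral_mul_const, Real.norm_eq_abs (a i)]
    exact mul_le_mul_of_nonneg_right (integral_norm_mul_comp_sub_left_le hf hh
      (hrep.integrable_mul_comp_sub_left hf hh (s i))) (abs_nonneg _)
  have hsum := hasSum_integral_of_ae_hasSum hint hnorm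
    (hkernel.mono fun τ hτ => by simpa only [mul_assoc] using hτ.mul_left (f τ))
  simpa only [integral_mul_const, ← hrep _] using hsum

end IsReproducedBy

end Reproducing

theorem lifting_sampling_to_zakai_general
    (f h : ℝ → ℝ) (A : ℝ)
    (tl : ℤ → ℝ) (ψ : ℤ → ℝ → ℝ)
    (hfA : ∀ t, |f t| ≤ A)
    (hhint : Integrable h)
    (hsumm : ∀ t, Summable (fun l : ℤ => |ψ l (t - tl l)|))
    (hrep : ∀ t τ : ℝ,
      Tendsto (fun L : ℕ => ∑ l ∈ Finset.Icc (-(L : ℤ)) (L : ℤ),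
          h (tl l - τ) * ψ l (t - tl l)) atTop (nhds (h (t - τ))))
    (hrepro : ∀ t, f t = ∫ τ, f τ * h (t - τ)) :
    ∀ t, Summable (fun l : ℤ => |f (tl l) * ψ l (t - tl l)|) ∧
      Tendsto (fun L : ℕ => ∑ l ∈ Finset.Icc (-(L : ℤ)) (L : ℤ),
          f (tl l) * ψ l (t - tl l)) atTop (nhds (f t)) := by
  intro t
  refine ⟨.of_nonneg_of_le (fun l => abs_nonneg _) (fun l => ?_) ((hsumm t).mul_left A), ?_⟩
  · rw [abs_mul]
    exact mul_le_mul_of_nonneg_right (hfA _) (abs_nonneg _)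
  · have hkernel (τ : ℝ) : HasSum (fun l => h (tl l - τ) * ψ l (t - tl l)) (h (t - τ))
        (SummationFilter.symmetricIcc ℤ) :=
      SummationFilter.hasSum_symmetricIcc_iff.mpr (hrep t τ)
    have hsum : HasSum (fun l => f (tl l) * ψ l (t - tl l)) (f t) :=
      IsReproducedBy.hasSum_of_hasSum_kernel hrepro hfA hhint (hsumm t) (ae_of_all _ hkernel)
    exact SummationFilter.hasSum_symmetricIcc_iff.mp
      (hsum.mono_left (SummationFilter.symmetricIcc ℤ).le_atTop)

theorem lifting_sampling_to_zakai
    (f h : ℝ → ℝ) (A C : ℝ)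
    (tl : ℤ → ℝ) (ψ : ℤ → ℝ → ℝ)
    (hfA : ∀ t, |f t| ≤ A)
    (hhint : Integrable h)
    (hhbdd : ∃ B, ∀ t, |h t| ≤ B)
    (hsumm : ∀ t, Summable (fun l : ℤ => |ψ l (t - tl l)|))
    (hC : ∀ t, (∑' l : ℤ, |ψ l (t - tl l)|) ≤ C)
    (hrep : ∀ t τ : ℝ,
      Tendsto (fun L : ℕ => ∑ l ∈ Finset.Icc (-(L : ℤ)) (L : ℤ),
          h (tl l - τ) * ψ l (t - tl l)) atTop (nhds (h (t - τ))))
    (hrepro : ∀ t, f t = ∫ τ, f τ * h (t - τ)) :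
    ∀ t, Summable (fun l : ℤ => |f (tl l) * ψ l (t - tl l)|) ∧
      Tendsto (fun L : ℕ => ∑ l ∈ Finset.Icc (-(L : ℤ)) (L : ℤ),
          f (tl l) * ψ l (t - tl l)) atTop (nhds (f t)) :=
  lifting_sampling_to_zakai_general f h A tl ψ hfA hhint hsumm hrep hrepro
end

section
/- Let c > (1+π)/4, M = 2^{b-1} with b ≥ 2, λ > 1, and consider the interval [A₀, B₀] with B₀ - A₀ ≤ 1/(Mλ). Let f be differentiable with |f(t)| ≤ 1, |f'(t)| ≤ π, and let d_b be continuous with d_b(A₀) = 2c/M and d_b(B₀) = -2c/M. Then there exist an index j ∈ {-(M-1), ..., M-1} and a point z ∈ [A₀, B₀] such that f(z) + d_b(z) = j/M, i.e., the dithered field crosses one of the quantization levels {0, ±1/M, ..., ±(M-1)/M} in [A₀, B₀]. -/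
/-!
Over the short interval the slope bound lets `f` drop by at most `π / M`, while the dither drops by
`4c / M > (1 + π) / M`, so `f + d` sweeps through an interval of length at least `1 / M`, which
contains a grid point `j / M`. Since `|f| ≤ 1` and `2c > 1`, that interval reaches into
`[-(M - 1) / M, (M - 1) / M]`, so the grid point can be clamped to one of the `2M - 1` levels.
-/

open Set

theorem exists_int_mem_Icc_of_add_one_le {x y : ℝ} {n : ℤ} (hn : 0 ≤ n) (hxy : x + 1 ≤ y)
    (hx : x ≤ n) (hy : -(n : ℝ) ≤ y) :
    ∃ j : ℤ, -n ≤ j ∧ j ≤ n ∧ (j : ℝ) ∈ Icc x y := by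
  refine ⟨max ⌈x⌉ (-n), le_max_right _ _, max_le (Int.ceil_le.mpr hx) (by omega), ?_, ?_⟩
  · push_cast
    exact (Int.le_ceil x).trans (le_max_left _ _)
  · push_cast
    exact max_le (by linarith [Int.ceil_lt_add_one x]) hy

theorem exists_level_mem_Icc {M : ℕ} (hM : 0 < M) {x y : ℝ} (hxy : x + 1 / M ≤ y)
    (hx : x ≤ 1 - 1 / M) (hy : -1 + 1 / M ≤ y) :
    ∃ j : ℤ, -((M : ℤ) - 1) ≤ j ∧ j ≤ (M : ℤ) - 1 ∧ (j : ℝ) / M ∈ Icc x y := by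
  have hMpos : (0 : ℝ) < M := Nat.cast_pos.mpr hM
  have hscale : ∀ t : ℝ, M * (t + 1 / M) = M * t + 1 := fun t => by field_simp
  obtain ⟨j, hjlo, hjhi, hjx, hjy⟩ := exists_int_mem_Icc_of_add_one_le (x := M * x) (y := M * y)
    (n := (M : ℤ) - 1) (by omega)
    (by rw [← hscale]; gcongr)
    (by push_cast; linarith [hscale (-1), mul_le_mul_of_nonneg_left hx hMpos.le])
    (by push_cast; linarith [hscale (-1), mul_le_mul_of_nonneg_left hy hMpos.le])
  refine ⟨j, hjlo, hjhi, ?_, ?_⟩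
  · rw [le_div_iff₀ hMpos]; linarith
  · rw [div_le_iff₀ hMpos]; linarith

theorem exists_level_crossing {g : ℝ → ℝ} {a b : ℝ} (hab : a ≤ b) (hg : ContinuousOn g (Icc a b))
    {M : ℕ} (hM : 0 < M) (hdrop : g b + 1 / M ≤ g a) (hb : g b ≤ 1 - 1 / M)
    (ha : -1 + 1 / M ≤ g a) :
    ∃ j : ℤ, -((M : ℤ) - 1) ≤ j ∧ j ≤ (M : ℤ) - 1 ∧ ∃ z ∈ Icc a b, g z = (j : ℝ) / M := by
  obtain ⟨j, hjlo, hjhi, hj⟩ := exists_level_mem_Icc hM hdrop hb ha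
  exact ⟨j, hjlo, hjhi, intermediate_value_Icc' hab hg hj⟩

theorem abs_sub_le_of_abs_deriv_le {f : ℝ → ℝ} (hf : Differentiable ℝ f) {C : ℝ}
    (hC : ∀ t, |deriv f t| ≤ C) {a b : ℝ} (hab : a ≤ b) : |f b - f a| ≤ C * (b - a) :=
  norm_image_sub_le_of_norm_deriv_le_segment' (f' := deriv f)
    (fun x _ => (hf x).hasDerivAt.hasDerivWithinAt) (fun x _ => hC x) b (right_mem_Icc.mpr hab)

theorem bbit_level_crossing_general
    (f d : ℝ → ℝ) (c lam A₀ B₀ : ℝ) (b : ℕ)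
    (M : ℕ) (hM : M = 2 ^ (b - 1))
    (hc : (1 + Real.pi) / 4 < c) (hlam : 1 < lam)
    (hAB : A₀ < B₀) (hlen : B₀ - A₀ ≤ 1 / (M * lam))
    (hfdiff : Differentiable ℝ f)
    (hfbdd : ∀ t, |f t| ≤ 1)
    (hfslope : ∀ t, |deriv f t| ≤ Real.pi)
    (hdcont : Continuous d)
    (hdA : d A₀ = 2 * c / M) (hdB : d B₀ = -(2 * c / M)) :
    ∃ j : ℤ, -((M : ℤ) - 1) ≤ j ∧ j ≤ (M : ℤ) - 1 ∧
      ∃ z ∈ Set.Icc A₀ B₀, f z + d z = (j : ℝ) / M := by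
  have hMpos : 0 < M := hM ▸ Nat.two_pow_pos _
  have hMreal : (0 : ℝ) < M := Nat.cast_pos.mpr hMpos
  have hshort : B₀ - A₀ ≤ 1 / M :=
    hlen.trans (one_div_le_one_div_of_le hMreal (le_mul_of_one_le_right hMreal.le hlam.le))
  have hfdrop : f B₀ - f A₀ ≤ Real.pi / M :=
    calc f B₀ - f A₀ ≤ |f B₀ - f A₀| := le_abs_self _
      _ ≤ Real.pi * (B₀ - A₀) := abs_sub_le_of_abs_deriv_le hfdiff hfslope hAB.le
      _ ≤ Real.pi * (1 / M) := by gcongr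
      _ = Real.pi / M := mul_one_div _ _
  have hdither_drop : 1 / M + Real.pi / M < 2 * c / M + 2 * c / M := by
    rw [← add_div, ← add_div]
    exact (div_lt_div_iff_of_pos_right hMreal).mpr (by linarith)
  have hdither_half : 1 / (M : ℝ) < 2 * c / M := by gcongr; linarith [Real.pi_gt_three]
  obtain ⟨hfB_lo, hfB_hi⟩ := abs_le.mp (hfbdd B₀)
  obtain ⟨hfA_lo, hfA_hi⟩ := abs_le.mp (hfbdd A₀)
  apply exists_level_crossing hAB.le (hfdiff.continuous.add hdcont).continuousOn hMpos <;>
    simp only [Pi.add_apply, hdA, hdB] <;> linarith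

theorem bbit_level_crossing
    (f d : ℝ → ℝ) (c lam A₀ B₀ : ℝ) (b : ℕ) (hb : 2 ≤ b)
    (M : ℕ) (hM : M = 2 ^ (b - 1))
    (hc : (1 + Real.pi) / 4 < c) (hlam : 1 < lam)
    (hAB : A₀ < B₀) (hlen : B₀ - A₀ ≤ 1 / (M * lam))
    (hfdiff : Differentiable ℝ f)
    (hfbdd : ∀ t, |f t| ≤ 1)
    (hfslope : ∀ t, |deriv f t| ≤ Real.pi)
    (hdcont : Continuous d)
    (hdA : d A₀ = 2 * c / M) (hdB : d B₀ = -(2 * c / M)) :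
    ∃ j : ℤ, -((M : ℤ) - 1) ≤ j ∧ j ≤ (M : ℤ) - 1 ∧
      ∃ z ∈ Set.Icc A₀ B₀, f z + d z = (j : ℝ) / M :=
  bbit_level_crossing_general f d c lam A₀ B₀ b M hM hc hlam hAB hlen hfdiff hfbdd hfslope hdcont
    hdA hdB
end
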